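/- arXiv:2505.11867 — 4 statements merged into one kernel-verified Lean document; each statement's English description precedes it below -/
import Mathlib

section
/- Let (X,d,≤,≪,τ) be a Lorentzian pre-length space with uniformly continuous τ, and X = ⋃_{i∈ℕ} U_i. Then Dim^τ(X) = sup_{i∈ℕ} Dim^τ(U_i). -/
/-!
For `m < N`, a cover of `A` by causal diamonds `J(a, b)` with `edist a b < δ` on which
`τ ≤ ε` has `ρ_N`-weight at most `ε ^ (N - m)` times its `ρ_m`-weight; uniform continuity of `τ`
together with `τ(a, a) = 0` makes `τ` small on all such diamonds once `δ` is small. Hence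
`W^m(A) < ∞` forces `W^N(A) = 0`. If `N > supᵢ Dim^τ(Uᵢ)`, every `W^N(Uᵢ)` vanishes, so by
countable subadditivity `W^N(X) = 0 < ∞` and `Dim^τ(X) ≤ N`.
-/

open Set MeasureTheory
open scoped ENNReal NNReal

noncomputable section

/-- A Lorentzian pre-length space structure on a metric space `X`. -/
structure LPLS (X : Type*) [MetricSpace X] : Type _ where
  causal : X → X → Prop
  chron : X → X → Prop
  tau : X → X → ℝ≥0∞
  causal_refl : ∀ x, causal x x
  causal_trans : ∀ x y z, causal x y → causal y z → causal x z
  chron_trans : ∀ x y z, chron x y → chron y z → chron x z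
  chron_causal : ∀ x y, chron x y → causal x y
  tau_lsc : LowerSemicontinuous fun p : X × X => tau p.1 p.2
  tau_rev_triangle : ∀ x y z, causal x y → causal y z → tau x y + tau y z ≤ tau x z
  tau_eq_zero : ∀ x y, ¬ causal x y → tau x y = 0
  tau_pos_iff : ∀ x y, 0 < tau x y ↔ chron x y

variable {Y : Type*}

/-- The causal diamond `J(a,b)`. -/
def cdiam (causal : Y → Y → Prop) (a b : Y) : Set Y := {z | causal a z ∧ causal z b}

/-- The set associated to a possibly-empty element of `𝒥`. -/
def optDiamond (causal : Y → Y → Prop) : Option (Y × Y) → Set Y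
  | none => ∅
  | some ab => cdiam causal ab.1 ab.2

/-- The weight `ρ_N`. -/
def optWeight (tau : Y → Y → ℝ≥0∞) (ω N : ℝ) : Option (Y × Y) → ℝ≥0∞
  | none => 0
  | some ab => ENNReal.ofReal ω * tau ab.1 ab.2 ^ N

/-- Diameter with respect to a (pseudo-)edistance `e`. -/
def ediamWith (e : Y → Y → ℝ≥0∞) (S : Set Y) : ℝ≥0∞ := ⨆ p ∈ S, ⨆ q ∈ S, e p q

/-- `V^N_δ`. -/
def Vdelta (e : Y → Y → ℝ≥0∞) (causal : Y → Y → Prop) (tau : Y → Y → ℝ≥0∞)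
    (ω N : ℝ) (δ : ℝ≥0∞) (A : Set Y) : ℝ≥0∞ :=
  ⨅ (c : ℕ → Option (Y × Y)) (_ : ∀ i, ∀ ab ∈ c i, causal ab.1 ab.2)
    (_ : ∀ i, ediamWith e (optDiamond causal (c i)) < δ)
    (_ : A ⊆ ⋃ i, optDiamond causal (c i)),
    ∑' i, optWeight tau ω N (c i)

/-- `V^N`. -/
def Vmeas (e : Y → Y → ℝ≥0∞) (causal : Y → Y → Prop) (tau : Y → Y → ℝ≥0∞)
    (ω N : ℝ) (A : Set Y) : ℝ≥0∞ :=
  ⨆ (δ : ℝ≥0∞) (_ : 0 < δ), Vdelta e causal tau ω N δ A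

/-- `W^N_δ`. -/
def Wdelta (e : Y → Y → ℝ≥0∞) (causal : Y → Y → Prop) (tau : Y → Y → ℝ≥0∞)
    (ω N : ℝ) (δ : ℝ≥0∞) (A : Set Y) : ℝ≥0∞ :=
  ⨅ (c : ℕ → Option (Y × Y)) (_ : ∀ i, ∀ ab ∈ c i, causal ab.1 ab.2)
    (_ : ∀ i, ∀ ab ∈ c i, e ab.1 ab.2 < δ)
    (_ : A ⊆ ⋃ i, optDiamond causal (c i)),
    ∑' i, optWeight tau ω N (c i)

/-- `W^N`. -/
def Wmeas (e : Y → Y → ℝ≥0∞) (causal : Y → Y → Prop) (tau : Y → Y → ℝ≥0∞)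
    (ω N : ℝ) (A : Set Y) : ℝ≥0∞ :=
  ⨆ (δ : ℝ≥0∞) (_ : 0 < δ), Wdelta e causal tau ω N δ A

/-- Uniform continuity of the time separation. -/
def TauUniformlyContinuous {Y : Type*} [MetricSpace Y] (tau : Y → Y → ℝ≥0∞) : Prop :=
  ∀ ε : ℝ≥0∞, 0 < ε → ∃ δ > (0 : ℝ), ∀ p q p' q' : Y, dist p p' < δ → dist q q' < δ →
    tau p' q' < tau p q + ε ∧ tau p q < tau p' q' + ε

/-- Timelike Hausdorff dimension for `W^N`. -/
def dimTauW (e : Y → Y → ℝ≥0∞) (causal : Y → Y → Prop) (tau : Y → Y → ℝ≥0∞)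
    (ω : ℝ) (A : Set Y) : ℝ≥0∞ :=
  ⨅ (N : ℝ≥0) (_ : Wmeas e causal tau ω (N : ℝ) A < ⊤), (N : ℝ≥0∞)

open Filter Topology in
theorem ENNReal.eq_zero_of_forall_le_rpow_mul {x C : ℝ≥0∞} {r : ℝ} (hr : 0 < r)
    (hC : C ≠ ⊤) (h : ∀ ε : ℝ≥0, 0 < ε → x ≤ (ε : ℝ≥0∞) ^ r * C) : x = 0 := by
  have hlim : Tendsto (fun ε : ℝ≥0 => (ε : ℝ≥0∞) ^ r * C) (𝓝[>] 0) (𝓝 0) := by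
    have hcont : Tendsto (fun ε : ℝ≥0 => (ε : ℝ≥0∞) ^ r) (𝓝 0) (𝓝 0) := by
      simpa [Function.comp_def, ENNReal.zero_rpow_of_pos hr] using
        ((ENNReal.continuous_rpow_const (y := r)).comp ENNReal.continuous_coe).tendsto 0
    simpa using ENNReal.Tendsto.mul_const (hcont.mono_left nhdsWithin_le_nhds) (Or.inr hC)
  exact nonpos_iff_eq_zero.1 <| ge_of_tendsto hlim <|
    eventually_nhdsWithin_of_forall fun ε hε => h ε hε

namespace LorentzianDim

variable {Y : Type*} {e : Y → Y → ℝ≥0∞} {causal : Y → Y → Prop} {tau : Y → Y → ℝ≥0∞}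
  {ω N : ℝ}

theorem Wdelta_mono {A B : Set Y} (h : A ⊆ B) (δ : ℝ≥0∞) :
    Wdelta e causal tau ω N δ A ≤ Wdelta e causal tau ω N δ B :=
  iInf_mono fun _ => iInf_mono fun _ => iInf_mono fun _ =>
    iInf_mono' fun hB => ⟨h.trans hB, le_rfl⟩

theorem Wdelta_anti_delta {δ δ' : ℝ≥0∞} (h : δ' ≤ δ) (A : Set Y) :
    Wdelta e causal tau ω N δ A ≤ Wdelta e causal tau ω N δ' A :=
  iInf_mono fun _ => iInf_mono fun _ =>
    iInf_mono' fun hδ' => ⟨fun i ab hab => (hδ' i ab hab).trans_le h, le_rfl⟩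

theorem Wdelta_le_Wmeas {δ : ℝ≥0∞} (hδ : 0 < δ) (A : Set Y) :
    Wdelta e causal tau ω N δ A ≤ Wmeas e causal tau ω N A :=
  le_iSup₂_of_le δ hδ le_rfl

theorem Wmeas_mono {A B : Set Y} (h : A ⊆ B) :
    Wmeas e causal tau ω N A ≤ Wmeas e causal tau ω N B :=
  iSup₂_mono fun δ _ => Wdelta_mono h δ

theorem dimTauW_mono {A B : Set Y} (h : A ⊆ B) :
    dimTauW e causal tau ω A ≤ dimTauW e causal tau ω B :=
  iInf_mono fun _ => iInf_mono' fun hB => ⟨(Wmeas_mono h).trans_lt hB, le_rfl⟩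

theorem dimTauW_le_of_Wmeas_lt_top {A : Set Y} {n : ℝ≥0}
    (h : Wmeas e causal tau ω n A < ⊤) : dimTauW e causal tau ω A ≤ n :=
  iInf₂_le n h

theorem Wdelta_iUnion_le_tsum_tsum {δ : ℝ≥0∞} {A : ℕ → Set Y} (c : ℕ → ℕ → Option (Y × Y))
    (hcausal : ∀ i j, ∀ ab ∈ c i j, causal ab.1 ab.2)
    (hsmall : ∀ i j, ∀ ab ∈ c i j, e ab.1 ab.2 < δ)
    (hcover : ∀ i, A i ⊆ ⋃ j, optDiamond causal (c i j)) :
    Wdelta e causal tau ω N δ (⋃ i, A i) ≤ ∑' i, ∑' j, optWeight tau ω N (c i j) := by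
  let q : ℕ ≃ ℕ × ℕ := (Denumerable.eqv (ℕ × ℕ)).symm
  have hcover' : (⋃ i, A i) ⊆ ⋃ n, optDiamond causal (c (q n).1 (q n).2) := by
    refine iUnion_subset fun i x hx => ?_
    obtain ⟨j, hj⟩ := mem_iUnion.1 (hcover i hx)
    exact mem_iUnion.2 ⟨q.symm (i, j), by simpa using hj⟩
  calc Wdelta e causal tau ω N δ (⋃ i, A i)
      ≤ ∑' n, optWeight tau ω N (c (q n).1 (q n).2) :=
        iInf₂_le_of_le _ (fun _ => hcausal _ _) <|
          iInf₂_le_of_le (fun _ => hsmall _ _) hcover' le_rfl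
    _ = ∑' p : ℕ × ℕ, optWeight tau ω N (c p.1 p.2) :=
        q.tsum_eq fun p => optWeight tau ω N (c p.1 p.2)
    _ = ∑' i, ∑' j, optWeight tau ω N (c i j) :=
        ENNReal.tsum_prod (f := fun i j => optWeight tau ω N (c i j))

theorem Wdelta_iUnion_le (δ : ℝ≥0∞) (A : ℕ → Set Y) :
    Wdelta e causal tau ω N δ (⋃ i, A i) ≤ ∑' i, Wdelta e causal tau ω N δ (A i) := by
  refine ENNReal.le_of_forall_pos_le_add fun η hη hfin => ?_
  obtain ⟨ε, hε, hεsum⟩ := ENNReal.exists_pos_sum_of_countable (ENNReal.coe_ne_zero.2 hη.ne') ℕ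
  have hcover : ∀ i, ∃ c : ℕ → Option (Y × Y), (∀ j, ∀ ab ∈ c j, causal ab.1 ab.2) ∧
      (∀ j, ∀ ab ∈ c j, e ab.1 ab.2 < δ) ∧ (A i ⊆ ⋃ j, optDiamond causal (c j)) ∧
      ∑' j, optWeight tau ω N (c j) < Wdelta e causal tau ω N δ (A i) + ε i := by
    intro i
    have hlt := ENNReal.lt_add_right (ENNReal.ne_top_of_tsum_ne_top hfin.ne i)
      (ENNReal.coe_ne_zero.2 (hε i).ne')
    simpa only [Wdelta, iInf_lt_iff, exists_prop] using hlt
  choose c hcausal hsmall hcov hsum using hcover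
  calc Wdelta e causal tau ω N δ (⋃ i, A i)
      ≤ ∑' i, ∑' j, optWeight tau ω N (c i j) :=
        Wdelta_iUnion_le_tsum_tsum c hcausal hsmall hcov
    _ ≤ ∑' i, (Wdelta e causal tau ω N δ (A i) + ε i) :=
        ENNReal.tsum_le_tsum fun i => (hsum i).le
    _ ≤ ∑' i, Wdelta e causal tau ω N δ (A i) + η := by
        rw [ENNReal.tsum_add]; gcongr

theorem Wmeas_iUnion_le (A : ℕ → Set Y) :
    Wmeas e causal tau ω N (⋃ i, A i) ≤ ∑' i, Wmeas e causal tau ω N (A i) :=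
  iSup₂_le fun _ hδ => (Wdelta_iUnion_le _ A).trans <|
    ENNReal.tsum_le_tsum fun _ => Wdelta_le_Wmeas hδ _

theorem Wmeas_iUnion_eq_zero {A : ℕ → Set Y} (h : ∀ i, Wmeas e causal tau ω N (A i) = 0) :
    Wmeas e causal tau ω N (⋃ i, A i) = 0 :=
  nonpos_iff_eq_zero.1 <| (Wmeas_iUnion_le A).trans_eq (by simp [h])

theorem optWeight_le_rpow_mul {m : ℝ} {ε : ℝ≥0∞} (hm : 0 ≤ m) (hmN : m ≤ N) {o : Option (Y × Y)}
    (hτ : ∀ ab ∈ o, tau ab.1 ab.2 ≤ ε) :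
    optWeight tau ω N o ≤ ε ^ (N - m) * optWeight tau ω m o := by
  rcases o with _ | ab
  · simp [optWeight]
  · have hsplit : tau ab.1 ab.2 ^ N = tau ab.1 ab.2 ^ m * tau ab.1 ab.2 ^ (N - m) := by
      rw [← ENNReal.rpow_add_of_nonneg _ _ hm (sub_nonneg.2 hmN), add_sub_cancel]
    calc optWeight tau ω N (some ab)
        = ENNReal.ofReal ω * tau ab.1 ab.2 ^ m * tau ab.1 ab.2 ^ (N - m) := by
          rw [optWeight, hsplit, mul_assoc]
      _ ≤ ENNReal.ofReal ω * tau ab.1 ab.2 ^ m * ε ^ (N - m) := by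
          gcongr
          exact hτ ab rfl
      _ = ε ^ (N - m) * optWeight tau ω m (some ab) := by rw [optWeight, mul_comm]

theorem Wdelta_le_rpow_mul {m : ℝ} {ε : ℝ≥0} (hε : 0 < ε) (hm : 0 ≤ m) (hmN : m ≤ N)
    {δ : ℝ≥0∞} (hτ : ∀ a b, e a b < δ → tau a b ≤ ε) (A : Set Y) :
    Wdelta e causal tau ω N δ A ≤ (ε : ℝ≥0∞) ^ (N - m) * Wdelta e causal tau ω m δ A := by
  have hpos : (ε : ℝ≥0∞) ^ (N - m) ≠ 0 :=
    (ENNReal.rpow_pos (by simpa using hε) ENNReal.coe_ne_top).ne'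
  have htop : (ε : ℝ≥0∞) ^ (N - m) ≠ ⊤ :=
    ENNReal.rpow_ne_top_of_nonneg (sub_nonneg.2 hmN) ENNReal.coe_ne_top
  simp only [Wdelta, ENNReal.mul_iInf_of_ne hpos htop, ← ENNReal.tsum_mul_left]
  refine iInf_mono fun c => iInf_mono fun _ => iInf_mono fun hsmall => iInf_mono fun _ =>
    ENNReal.tsum_le_tsum fun i => optWeight_le_rpow_mul hm hmN fun ab hab =>
      hτ _ _ (hsmall i ab hab)

theorem Wmeas_eq_zero_of_lt
    (hτ : ∀ ε : ℝ≥0, 0 < ε → ∃ δ > 0, ∀ a b, e a b < δ → tau a b ≤ ε)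
    {A : Set Y} {m : ℝ} (hm : 0 ≤ m) (hmN : m < N)
    (hfin : Wmeas e causal tau ω m A < ⊤) : Wmeas e causal tau ω N A = 0 := by
  refine ENNReal.eq_zero_of_forall_le_rpow_mul (sub_pos.2 hmN) hfin.ne fun ε hε => ?_
  obtain ⟨δ, hδ, hτδ⟩ := hτ ε hε
  refine iSup₂_le fun δ' hδ' => ?_
  calc Wdelta e causal tau ω N δ' A
      ≤ Wdelta e causal tau ω N (min δ δ') A := Wdelta_anti_delta (min_le_right _ _) A
    _ ≤ (ε : ℝ≥0∞) ^ (N - m) * Wdelta e causal tau ω m (min δ δ') A :=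
        Wdelta_le_rpow_mul hε hm hmN.le
          (fun a b hlt => hτδ a b (hlt.trans_le (min_le_left _ _))) A
    _ ≤ (ε : ℝ≥0∞) ^ (N - m) * Wmeas e causal tau ω m A := by
        gcongr; exact Wdelta_le_Wmeas (lt_min hδ hδ') A

theorem Wmeas_eq_zero_of_dimTauW_lt
    (hτ : ∀ ε : ℝ≥0, 0 < ε → ∃ δ > 0, ∀ a b, e a b < δ → tau a b ≤ ε)
    {A : Set Y} {n : ℝ≥0} (h : dimTauW e causal tau ω A < n) :
    Wmeas e causal tau ω n A = 0 := by
  obtain ⟨m, hfin, hmn⟩ : ∃ m : ℝ≥0, Wmeas e causal tau ω m A < ⊤ ∧ (m : ℝ≥0∞) < n := by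
    simpa only [dimTauW, iInf_lt_iff, exists_prop] using h
  exact Wmeas_eq_zero_of_lt hτ m.2 (by exact_mod_cast hmn) hfin

theorem dimTauW_iUnion
    (hτ : ∀ ε : ℝ≥0, 0 < ε → ∃ δ > 0, ∀ a b, e a b < δ → tau a b ≤ ε)
    (U : ℕ → Set Y) :
    dimTauW e causal tau ω (⋃ i, U i) = ⨆ i, dimTauW e causal tau ω (U i) := by
  refine le_antisymm (le_of_forall_gt fun c hc => ?_)
    (iSup_le fun i => dimTauW_mono (subset_iUnion U i))
  obtain ⟨n, hsup, hnc⟩ := ENNReal.lt_iff_exists_nnreal_btwn.1 hc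
  have hzero : Wmeas e causal tau ω n (⋃ i, U i) = 0 := Wmeas_iUnion_eq_zero fun i =>
    Wmeas_eq_zero_of_dimTauW_lt hτ ((le_iSup _ i).trans_lt hsup)
  exact (dimTauW_le_of_Wmeas_lt_top (hzero ▸ ENNReal.zero_lt_top)).trans_lt hnc

end LorentzianDim

theorem LPLS.tau_self_eq_zero {X : Type*} [MetricSpace X] (L : LPLS X) {a : X}
    (ha : L.tau a a ≠ ⊤) : L.tau a a = 0 := by
  by_contra h0
  exact (L.tau_rev_triangle a a a (L.causal_refl a) (L.causal_refl a)).not_gt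
    (ENNReal.lt_add_right ha h0)

theorem TauUniformlyContinuous.tau_ne_top {X : Type*} [MetricSpace X] {tau : X → X → ℝ≥0∞}
    (h : TauUniformlyContinuous tau) (a b : X) : tau a b ≠ ⊤ := by
  obtain ⟨δ, hδ, hδtau⟩ := h 1 one_pos
  intro htop
  simpa [htop] using (hδtau a b a b (by simpa using hδ) (by simpa using hδ)).1

/-- Uniform continuity of `τ` at the diagonal, where `τ(a, a) = 0`. -/
theorem LPLS.exists_tau_le_of_edist_lt {X : Type*} [MetricSpace X] (L : LPLS X)
    (htau : TauUniformlyContinuous L.tau) (ε : ℝ≥0) (hε : 0 < ε) :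
    ∃ δ > 0, ∀ a b, edist a b < δ → L.tau a b ≤ ε := by
  obtain ⟨δ, hδ, hδtau⟩ := htau ε (by simpa using hε)
  refine ⟨ENNReal.ofReal δ, ENNReal.ofReal_pos.2 hδ, fun a b hab => ?_⟩
  have := (hδtau a a a b (by simpa using hδ) (edist_lt_ofReal.1 hab)).1
  rw [L.tau_self_eq_zero (htau.tau_ne_top a a), zero_add] at this
  exact this.le

theorem stmt9_general {X : Type*} [MetricSpace X] (L : LPLS X) (ω : ℝ)
    (htau : TauUniformlyContinuous L.tau) (U : ℕ → Set X) (hU : (⋃ i, U i) = Set.univ) :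
    dimTauW (fun a b => edist a b) L.causal L.tau ω (Set.univ : Set X) =
      ⨆ i, dimTauW (fun a b => edist a b) L.causal L.tau ω (U i) := by
  rw [← hU]
  exact LorentzianDim.dimTauW_iUnion (L.exists_tau_le_of_edist_lt htau) U

/-- If `τ` is uniformly continuous and `X = ⋃ᵢ Uᵢ`, then
`Dim^τ(X) = supᵢ Dim^τ(Uᵢ)`. -/
theorem stmt9 {X : Type*} [MetricSpace X] (L : LPLS X) (ω : ℝ) (hω : 0 < ω)
    (htau : TauUniformlyContinuous L.tau) (U : ℕ → Set X) (hU : (⋃ i, U i) = Set.univ) :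
    dimTauW (fun a b => edist a b) L.causal L.tau ω (Set.univ : Set X) =
      ⨆ i, dimTauW (fun a b => edist a b) L.causal L.tau ω (U i) :=
  stmt9_general L ω htau U hU
end
end

section
/- Let (X,d,≤,≪,τ) be a Lorentzian pre-length space and A ⊆ X open. Let V'^N be the timelike Hausdorff measure of the restricted Lorentzian pre-length space (A, d|_A, ≤|_A, ≪|_A, τ|_A). Then V'^N(A) ≤ V^N(A). -/
open Set MeasureTheory
open scoped ENNReal NNReal

noncomputable section

variable {Y : Type*}

/-- The restriction of a Lorentzian pre-length structure to a subset `A ⊆ X`. -/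
def LPLS.restrict {X : Type*} [MetricSpace X] (L : LPLS X) (A : Set X) : LPLS A where
  causal a b := L.causal a b
  chron a b := L.chron a b
  tau a b := L.tau a b
  causal_refl x := L.causal_refl x
  causal_trans x y z := L.causal_trans x y z
  chron_trans x y z := L.chron_trans x y z
  chron_causal x y := L.chron_causal x y
  tau_lsc := by
    intro p y hy
    have hc : Continuous fun q : A × A => (((q.1 : X), (q.2 : X)) : X × X) := by continuity
    exact (hc.continuousAt (x := p)).eventually (L.tau_lsc ((p.1 : X), (p.2 : X)) y hy)
  tau_rev_triangle x y z hxy hyz := L.tau_rev_triangle x y z hxy hyz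
  tau_eq_zero x y h := L.tau_eq_zero x y h
  tau_pos_iff x y := L.tau_pos_iff x y

/-!
Both measures are compared with the metric outer measure `μ` on `A` generated by the weights
of the causal diamonds of `A`. Covers of `A` by small diamonds of `A` bound `V'^N` by `μ`.
Conversely, a diamond of `X` of diameter below `1/n` that meets
`D_n = {a ∈ A : d(a, Aᶜ) ≥ 1/n}` lies inside `A`, so it is a diamond of `A`; hence
`μ(D_n) ≤ V^N(A)`. The sets `D_n` are closed and exhaust `A`, and closed sets are measurable
for a metric outer measure, so `μ(A) = sup_n μ(D_n)`.
-/

open Metric MeasureTheory.OuterMeasure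

/-- The least weight of a presentation of `s` as a causal diamond `J(a,b)`, and `∞` if there is
none. -/
def diamondContent (causal : Y → Y → Prop) (tau : Y → Y → ℝ≥0∞) (ω N : ℝ) (s : Set Y) :
    ℝ≥0∞ :=
  ⨅ (ab : Y × Y) (_ : causal ab.1 ab.2) (_ : s = cdiam causal ab.1 ab.2),
    optWeight tau ω N (some ab)

section DiamondContent

variable {causal : Y → Y → Prop} {tau : Y → Y → ℝ≥0∞} {ω N : ℝ}

lemma diamondContent_cdiam_le {a b : Y} (hab : causal a b) :
    diamondContent causal tau ω N (cdiam causal a b) ≤ optWeight tau ω N (some (a, b)) :=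
  iInf₂_le_of_le (a, b) hab <| iInf_le _ rfl

lemma exists_eq_cdiam_of_diamondContent_lt {s : Set Y} {w : ℝ≥0∞}
    (h : diamondContent causal tau ω N s < w) :
    ∃ ab : Y × Y, causal ab.1 ab.2 ∧ s = cdiam causal ab.1 ab.2 ∧
      optWeight tau ω N (some ab) < w := by
  simpa only [diamondContent, iInf_lt_iff, exists_prop] using h

variable [EMetricSpace Y]

lemma exists_optDiamond_superset_of_lt {r δ w : ℝ≥0∞} (hrδ : r < δ) {s : Set Y}
    (hs : ⨆ _ : s.Nonempty,
      extend (fun t (_ : ediam t ≤ r) => diamondContent causal tau ω N t) s < w) :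
    ∃ o : Option (Y × Y), (∀ ab ∈ o, causal ab.1 ab.2) ∧
      ediamWith edist (optDiamond causal o) < δ ∧ s ⊆ optDiamond causal o ∧
      optWeight tau ω N o < w := by
  rcases s.eq_empty_or_nonempty with rfl | hne
  · refine ⟨none, by simp, ?_, empty_subset _, zero_le.trans_lt hs⟩
    exact (ediam_empty (X := Y)).trans_lt (zero_le.trans_lt hrδ)
  obtain ⟨hdiam, hs⟩ := iInf_lt_iff.1 ((iSup_pos hne).symm.trans_lt hs)
  obtain ⟨ab, hab, rfl, hw⟩ := exists_eq_cdiam_of_diamondContent_lt hs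
  exact ⟨some ab, fun _ h => Option.some_inj.1 h ▸ hab, hdiam.trans_lt hrδ, subset_rfl, hw⟩

lemma Vdelta_le_mkMetric'_pre {r δ : ℝ≥0∞} (hrδ : r < δ) (S : Set Y) :
    Vdelta edist causal tau ω N δ S ≤ mkMetric'.pre (diamondContent causal tau ω N) r S := by
  rw [mkMetric'.pre, boundedBy_apply]
  refine le_iInf₂ fun t ht => ENNReal.le_of_forall_pos_le_add fun ε hε hfin => ?_
  set F : ℕ → ℝ≥0∞ := fun n => ⨆ _ : (t n).Nonempty,
    extend (fun s (_ : ediam s ≤ r) => diamondContent causal tau ω N s) (t n)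
  obtain ⟨e, he0, hesum⟩ :=
    ENNReal.exists_pos_sum_of_countable' (ENNReal.coe_pos.2 hε).ne' ℕ
  have hFe (n : ℕ) : F n < F n + e n :=
    ENNReal.lt_add_right (ENNReal.ne_top_of_tsum_ne_top hfin.ne n) (he0 n).ne'
  choose c hcau hdiam hsub hw using fun n => exists_optDiamond_superset_of_lt hrδ (hFe n)
  calc Vdelta edist causal tau ω N δ S
      ≤ ∑' n, optWeight tau ω N (c n) :=
        iInf_le_of_le c <| iInf_le_of_le hcau <| iInf_le_of_le hdiam <|
          iInf_le _ (ht.trans (iUnion_mono hsub))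
    _ ≤ ∑' n, (F n + e n) := ENNReal.tsum_le_tsum fun n => (hw n).le
    _ = ∑' n, F n + ∑' n, e n := ENNReal.tsum_add
    _ ≤ ∑' n, F n + ε := by gcongr

lemma Vmeas_le_mkMetric' (S : Set Y) :
    Vmeas edist causal tau ω N S ≤ mkMetric' (diamondContent causal tau ω N) S := by
  refine iSup₂_le fun δ hδ => ?_
  obtain ⟨r, hr0, hrδ⟩ := exists_between hδ
  exact (Vdelta_le_mkMetric'_pre hrδ S).trans
    ((le_iSup₂ (f := fun r (_ : 0 < r) => mkMetric'.pre (diamondContent causal tau ω N) r)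
      r hr0) S)

end DiamondContent

lemma subset_compl_of_ediam_lt_infEDist {X : Type*} [PseudoEMetricSpace X] {S T : Set X}
    {w : X} (hw : w ∈ S) (h : ediam S < infEDist w T) : S ⊆ Tᶜ := fun _ hy hyT =>
  (h.trans_le ((infEDist_le_edist_of_mem hyT).trans (edist_le_ediam_of_mem hw hy))).false

lemma iUnion_inv_le_infEDist_compl {X : Type*} [PseudoEMetricSpace X] {A : Set X}
    (hA : IsOpen A) : ⋃ n : ℕ, {a : A | (n : ℝ≥0∞)⁻¹ ≤ infEDist (a : X) Aᶜ} = univ := by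
  refine eq_univ_of_forall fun a => mem_iUnion.2 ?_
  have hpos : infEDist (a : X) Aᶜ ≠ 0 := by
    rw [← pos_iff_ne_zero, infEDist_pos_iff_notMem_closure, hA.isClosed_compl.closure_eq]
    exact not_not.2 a.2
  obtain ⟨n, hn⟩ := ENNReal.exists_inv_nat_lt hpos
  exact ⟨n, hn.le⟩

lemma MeasureTheory.OuterMeasure.IsMetric.apply_iUnion_of_monotone {X : Type*}
    [EMetricSpace X] {μ : OuterMeasure X} (hμ : μ.IsMetric) {D : ℕ → Set X} (hmono : Monotone D)
    (hclosed : ∀ n, IsClosed (D n)) : μ (⋃ n, D n) = ⨆ n, μ (D n) := by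
  borelize X
  have hmeas : ∀ n, MeasurableSet (D n) := fun n => (hclosed n).measurableSet
  have h := hmono.directed_le.measure_iUnion (μ := μ.toMeasure hμ.le_caratheodory)
  rwa [toMeasure_apply _ _ (MeasurableSet.iUnion hmeas),
    iSup_congr fun n => toMeasure_apply _ _ (hmeas n)] at h

namespace LPLS

variable {X : Type*} [MetricSpace X] {L : LPLS X} {A : Set X} {ω N : ℝ}

lemma mkMetric'_pre_preimage_optDiamond_le {o : Option (X × X)}
    (hcau : ∀ ab ∈ o, L.causal ab.1 ab.2) {r : ℝ≥0∞}
    (hr : ediamWith edist (optDiamond L.causal o) ≤ r) {w : A}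
    (hw : (w : X) ∈ optDiamond L.causal o)
    (hwA : ediamWith edist (optDiamond L.causal o) < infEDist (w : X) Aᶜ) :
    mkMetric'.pre (diamondContent (L.restrict A).causal (L.restrict A).tau ω N) r
      (Subtype.val ⁻¹' optDiamond L.causal o) ≤ optWeight L.tau ω N o := by
  obtain _ | ⟨a, b⟩ := o
  · exact absurd hw (notMem_empty _)
  have hab : L.causal a b := hcau (a, b) rfl
  have hJA : cdiam L.causal a b ⊆ A := by
    simpa only [compl_compl] using
      subset_compl_of_ediam_lt_infEDist (S := cdiam L.causal a b) hw hwA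
  have ha : a ∈ A := hJA ⟨L.causal_refl a, hab⟩
  have hb : b ∈ A := hJA ⟨hab, L.causal_refl b⟩
  calc mkMetric'.pre _ r (Subtype.val ⁻¹' cdiam L.causal a b)
      ≤ diamondContent (L.restrict A).causal (L.restrict A).tau ω N
          (cdiam (L.restrict A).causal ⟨a, ha⟩ ⟨b, hb⟩) :=
        mkMetric'.pre_le <| ediam_le fun _ hx _ hy =>
          (edist_le_ediam_of_mem (s := cdiam L.causal a b) hx hy).trans hr
    _ ≤ optWeight L.tau ω N (some (a, b)) :=
        diamondContent_cdiam_le (tau := (L.restrict A).tau) hab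

lemma mkMetric'_pre_le_Vdelta {D : Set A} {g r δ : ℝ≥0∞}
    (hD : ∀ a ∈ D, g ≤ infEDist (a : X) Aᶜ) (hδr : δ ≤ r) (hδg : δ ≤ g) :
    mkMetric'.pre (diamondContent (L.restrict A).causal (L.restrict A).tau ω N) r D ≤
      Vdelta edist L.causal L.tau ω N δ A := by
  refine le_iInf fun c => le_iInf fun hcau => le_iInf fun hdiam => le_iInf fun hcov => ?_
  set t : ℕ → Set A := fun i => {z | (z : X) ∈ optDiamond L.causal (c i) ∧
    ∃ w ∈ D, (w : X) ∈ optDiamond L.causal (c i)}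
  have hDt : D ⊆ ⋃ i, t i := fun x hx =>
    have ⟨i, hi⟩ := mem_iUnion.1 (hcov x.2)
    mem_iUnion.2 ⟨i, hi, x, hx, hi⟩
  refine (measure_mono hDt).trans <| (measure_iUnion_le t).trans <|
    ENNReal.tsum_le_tsum fun i => ?_
  rcases (t i).eq_empty_or_nonempty with h | ⟨-, -, w, hwD, hw⟩
  · simp [h]
  · exact (measure_mono fun z hz => hz.1).trans <|
      mkMetric'_pre_preimage_optDiamond_le (hcau i) ((hdiam i).le.trans hδr) hw
        ((hdiam i).trans_le (hδg.trans (hD w hwD)))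

lemma mkMetric'_le_Vmeas {D : Set A} {g : ℝ≥0∞} (hg : 0 < g)
    (hD : ∀ a ∈ D, g ≤ infEDist (a : X) Aᶜ) :
    mkMetric' (diamondContent (L.restrict A).causal (L.restrict A).tau ω N) D ≤
      Vmeas edist L.causal L.tau ω N A := by
  simp only [mkMetric', iSup_apply]
  refine iSup₂_le fun r hr => (mkMetric'_pre_le_Vdelta hD (min_le_left r g)
    (min_le_right r g)).trans ?_
  exact le_iSup₂ (f := fun δ (_ : 0 < δ) => Vdelta edist L.causal L.tau ω N δ A)
    (min r g) (lt_min hr hg)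

end LPLS

theorem stmt10_general {X : Type*} [MetricSpace X] (L : LPLS X) (A : Set X) (hA : IsOpen A)
    (ω N : ℝ) :
    Vmeas (fun a b : A => edist a b) (L.restrict A).causal (L.restrict A).tau ω N
        (Set.univ : Set A) ≤
      Vmeas (fun a b : X => edist a b) L.causal L.tau ω N A := by
  set D : ℕ → Set A := fun n => {a | (n : ℝ≥0∞)⁻¹ ≤ infEDist (a : X) Aᶜ}
  have hmono : Monotone D := fun _ _ hnm _ ha =>
    (ENNReal.inv_le_inv.2 (Nat.cast_le.2 hnm)).trans ha
  have hclosed (n : ℕ) : IsClosed (D n) :=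
    isClosed_le continuous_const (continuous_infEDist.comp continuous_subtype_val)
  calc Vmeas edist (L.restrict A).causal (L.restrict A).tau ω N univ
      ≤ mkMetric' (diamondContent (L.restrict A).causal (L.restrict A).tau ω N) univ :=
        Vmeas_le_mkMetric' univ
    _ = ⨆ n, mkMetric' (diamondContent (L.restrict A).causal (L.restrict A).tau ω N) (D n) := by
        rw [← iUnion_inv_le_infEDist_compl hA,
          (mkMetric'_isMetric _).apply_iUnion_of_monotone hmono hclosed]
    _ ≤ Vmeas edist L.causal L.tau ω N A :=
        iSup_le fun n => L.mkMetric'_le_Vmeas (ENNReal.inv_pos.2 (ENNReal.natCast_ne_top n))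
          fun _ ha => ha

/-- For an open subset `A ⊆ X`, the timelike Hausdorff measure `V'^N` of the restricted
Lorentzian pre-length space `(A, d|_A, ≤|_A, ≪|_A, τ|_A)` satisfies `V'^N(A) ≤ V^N(A)`. -/
theorem stmt10 {X : Type*} [MetricSpace X] (L : LPLS X) (A : Set X) (hA : IsOpen A)
    (ω N : ℝ) (hω : 0 < ω) (hN : 0 ≤ N) :
    Vmeas (fun a b : A => edist a b) (L.restrict A).causal (L.restrict A).tau ω N
        (Set.univ : Set A) ≤
      Vmeas (fun a b : X => edist a b) L.causal L.tau ω N A :=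
  stmt10_general L A hA ω N
end
end

section
/- Let (Y = I ×_f X, D, ≤, ≪, τ) be a Lorentzian warped product over a length space (X,d) with continuous f: I → (0,∞), and let p = (t₀, p̄), q = (t₁, q̄) ∈ Y with p ≤ q. Then J(p,q) ⊆ {(t,r̄) ∈ Y : t₀ ≤ t ≤ t₁, d(p̄,r̄) ≤ (t−t₀)/m_{t₀,t}, d(r̄,q̄) ≤ (t₁−t)/m_{t,t₁}}, where m_{s,t} := min_{s ≤ u ≤ t} f(u) > 0. -/
open Set MeasureTheory
open scoped ENNReal NNReal

noncomputable section

variable {Y : Type*}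

/-- Witness data for a future-directed causal curve `(α, β)` in a Lorentzian warped
product with warping function `f`: `α'` is the a.e. derivative of the absolutely
continuous `α` (so that `α` is the integral of `α'`), and `v` is an integrable upper
bound for the metric speed of `β`, satisfying the causal inequality
`−α̇² + (f∘α)² v² ≤ 0` a.e. -/
def WPCausalWitness {X : Type*} [MetricSpace X] (f : ℝ → ℝ) (α : ℝ → ℝ) (β : ℝ → X)
    (a b : ℝ) (α' v : ℝ → ℝ) : Prop :=
  IntervalIntegrable α' MeasureTheory.volume a b ∧
  IntervalIntegrable v MeasureTheory.volume a b ∧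
  (∀ t, 0 ≤ v t) ∧
  (∀ t ∈ Set.Icc a b, α t - α a = ∫ u in a..t, α' u) ∧
  (∀ s ∈ Set.Icc a b, ∀ t ∈ Set.Icc a b, s ≤ t → dist (β s) (β t) ≤ ∫ u in s..t, v u) ∧
  (∀ᵐ t ∂MeasureTheory.volume, t ∈ Set.Icc a b → (f (α t) * v t) ^ 2 ≤ α' t ^ 2)

/-- A future-directed causal curve `(α, β)` on `[a,b]` in the warped product `I ×_f X`. -/
def IsWPCausalCurve {X : Type*} [MetricSpace X] (I : Set ℝ) (f : ℝ → ℝ)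
    (α : ℝ → ℝ) (β : ℝ → X) (a b : ℝ) : Prop :=
  a < b ∧ StrictMonoOn α (Set.Icc a b) ∧ (∀ t ∈ Set.Icc a b, α t ∈ I) ∧
  ∃ α' v : ℝ → ℝ, WPCausalWitness f α β a b α' v

/-- The causal relation of the Lorentzian warped product `I ×_f X`:
`p ≤ q` iff `p = q` or there is a future-directed causal curve from `p` to `q`. -/
def WPcausal {X : Type*} [MetricSpace X] (I : Set ℝ) (f : ℝ → ℝ) (p q : ℝ × X) : Prop :=
  p = q ∨ ∃ α : ℝ → ℝ, ∃ β : ℝ → X, ∃ a b : ℝ, IsWPCausalCurve I f α β a b ∧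
    α a = p.1 ∧ β a = p.2 ∧ α b = q.1 ∧ β b = q.2

/-- A length space: the distance is the infimum of lengths (total variations) of
continuous paths. -/
def IsLengthSpace (X : Type*) [MetricSpace X] : Prop :=
  ∀ x y : X, edist x y =
    ⨅ (γ : ℝ → X) (_ : ContinuousOn γ (Set.Icc 0 1)) (_ : γ 0 = x) (_ : γ 1 = y),
      eVariationOn γ (Set.Icc 0 1)


lemma ae_nonneg_of_intervalIntegral_nonneg {g : ℝ → ℝ} {a b : ℝ} (hab : a ≤ b)
    (hg : IntervalIntegrable g volume a b)
    (h : ∀ s ∈ Icc a b, ∀ t ∈ Icc a b, s ≤ t → 0 ≤ ∫ u in s..t, g u) :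
    ∀ᵐ t ∂(volume : Measure ℝ), t ∈ Icc a b → 0 ≤ g t := by
  set g₀ : ℝ → ℝ := (Icc a b).indicator g with hg₀def
  have hint : IntegrableOn g (Icc a b) := by
    rw [← intervalIntegrable_iff_integrableOn_Icc_of_le hab]; exact hg
  have hg₀int : Integrable g₀ := (integrable_indicator_iff measurableSet_Icc).2 hint
  have key : ∀ x : ℝ, ∀ δ : ℝ, 0 < δ → 0 ≤ ∫ y in Metric.closedBall x δ, g₀ y := by
    intro x δ hδ
    rw [Real.closedBall_eq_Icc, setIntegral_indicator measurableSet_Icc, Icc_inter_Icc]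
    rcases le_or_gt (max (x - δ) a) (min (x + δ) b) with hle | hlt
    · rw [integral_Icc_eq_integral_Ioc, ← intervalIntegral.integral_of_le hle]
      refine h _ ⟨le_max_right _ _, hle.trans (min_le_right _ _)⟩ _
        ⟨(le_max_right _ _).trans hle, min_le_right _ _⟩ hle
    · rw [Icc_eq_empty (not_le.2 hlt)]; simp
  have := IsUnifLocDoublingMeasure.ae_tendsto_average (μ := (volume : Measure ℝ))
    hg₀int.locallyIntegrable 1
  filter_upwards [this] with x hx hxmem
  have htend : Filter.Tendsto (fun δ : ℝ => ⨍ y in Metric.closedBall x δ, g₀ y)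
      (nhdsWithin 0 (Ioi 0)) (nhds (g₀ x)) := by
    refine hx (fun _ => x) id Filter.tendsto_id ?_
    filter_upwards [self_mem_nhdsWithin] with δ (hδ : δ ∈ Ioi 0)
    exact Metric.mem_closedBall_self (by simpa using hδ.le)
  have h0 : 0 ≤ g₀ x := by
    refine ge_of_tendsto htend ?_
    filter_upwards [self_mem_nhdsWithin] with δ (hδ : δ ∈ Ioi 0)
    rw [setAverage_eq]
    exact smul_nonneg (by positivity) (key x δ hδ)
  rwa [hg₀def, indicator_of_mem hxmem] at h0

lemma wp_causal_bound {X : Type*} [MetricSpace X] {I : Set ℝ} (hIconn : I.OrdConnected)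
    {f : ℝ → ℝ} (hf : ContinuousOn f I) (hfpos : ∀ t ∈ I, 0 < f t)
    {x y : ℝ × X} (hxy : WPcausal I f x y) :
    x.1 ≤ y.1 ∧ dist x.2 y.2 ≤ (y.1 - x.1) / sInf (f '' Icc x.1 y.1) := by
  rcases hxy with rfl | ⟨α, β, a, b, ⟨hab, hmono, hI, α', v, hα'int, hvint, hv0, hαeq, hβ, hcaus⟩,
    ha1, ha2, hb1, hb2⟩
  · simp
  have hale : a ≤ b := hab.le
  have haI : a ∈ Icc a b := ⟨le_refl a, hale⟩
  have hbI : b ∈ Icc a b := ⟨hale, le_refl b⟩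
  have hxy1 : x.1 < y.1 := by rw [← ha1, ← hb1]; exact hmono haI hbI hab
  have hJI : Icc x.1 y.1 ⊆ I := by
    rw [← ha1, ← hb1]; exact hIconn.out (hI a haI) (hI b hbI)
  have hJne : (Icc x.1 y.1).Nonempty := nonempty_Icc.2 hxy1.le
  obtain ⟨t₀, ht₀J, hmin⟩ := isCompact_Icc.exists_isMinOn hJne (hf.mono hJI)
  set m := f t₀ with hmdef
  have hm0 : 0 < m := hfpos t₀ (hJI ht₀J)
  have hsinf : sInf (f '' Icc x.1 y.1) = m := by
    apply le_antisymm
    · exact csInf_le ⟨0, fun z ⟨u, hu, hz⟩ => hz ▸ (hfpos u (hJI hu)).le⟩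
        (mem_image_of_mem f ht₀J)
    · exact le_csInf (hJne.image f) (fun z ⟨u, hu, hz⟩ => hz ▸ hmin hu)
  -- α maps into J
  have hαJ : ∀ t ∈ Icc a b, α t ∈ Icc x.1 y.1 := by
    intro t ht
    rw [← ha1, ← hb1]
    exact ⟨(hmono.monotoneOn) haI ht ht.1, (hmono.monotoneOn) ht hbI ht.2⟩
  -- subinterval integrability
  have hsub : ∀ s ∈ Icc a b, ∀ t ∈ Icc a b, IntervalIntegrable α' volume s t := by
    intro s hs t ht
    exact hα'int.mono_set (uIcc_subset_uIcc (by rw [uIcc_of_le hale]; exact hs)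
      (by rw [uIcc_of_le hale]; exact ht))
  -- α' ≥ 0 a.e.
  have hα'nn : ∀ᵐ t ∂(volume : Measure ℝ), t ∈ Icc a b → 0 ≤ α' t := by
    refine ae_nonneg_of_intervalIntegral_nonneg hale hα'int ?_
    intro s hs t ht hst
    have : ∫ u in s..t, α' u = (α t - α a) - (α s - α a) := by
      rw [hαeq t ht, hαeq s hs, ← intervalIntegral.integral_interval_sub_left
        (hsub a haI t ht) (hsub a haI s hs)]
    rw [this]
    have := hmono.monotoneOn hs ht hst
    linarith
  -- pointwise speed bound
  have hspeed : ∀ᵐ t ∂(volume : Measure ℝ), t ∈ Icc a b → m * v t ≤ α' t := by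
    filter_upwards [hcaus, hα'nn] with t h1 h2 ht
    have h1 := h1 ht; have h2 := h2 ht
    have hαtI : α t ∈ I := hI t ht
    have hfv : 0 ≤ f (α t) * v t := mul_nonneg (hfpos _ hαtI).le (hv0 t)
    have hmf : m ≤ f (α t) := hmin (hαJ t ht)
    have : f (α t) * v t ≤ α' t := by
      calc f (α t) * v t = Real.sqrt ((f (α t) * v t) ^ 2) := (Real.sqrt_sq hfv).symm
        _ ≤ Real.sqrt (α' t ^ 2) := Real.sqrt_le_sqrt h1
        _ = α' t := Real.sqrt_sq h2
    nlinarith [hv0 t]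
  -- integrate
  have hvint' : IntervalIntegrable (fun t => m * v t) volume a b := hvint.const_mul m
  have hint : ∫ t in a..b, m * v t ≤ ∫ t in a..b, α' t := by
    refine intervalIntegral.integral_mono_ae_restrict hale hvint' hα'int ?_
    refine (ae_restrict_iff' measurableSet_Icc).2 ?_
    exact hspeed
  rw [intervalIntegral.integral_const_mul] at hint
  have hrhs : ∫ t in a..b, α' t = y.1 - x.1 := by
    rw [← hαeq b hbI, ha1, hb1]
  have hdist : dist x.2 y.2 ≤ ∫ t in a..b, v t := by
    rw [← ha2, ← hb2]; exact hβ a haI b hbI hale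
  refine ⟨hxy1.le, ?_⟩
  rw [hsinf, le_div_iff₀ hm0]
  calc dist x.2 y.2 * m ≤ (∫ t in a..b, v t) * m := by
        refine mul_le_mul_of_nonneg_right hdist hm0.le
    _ = m * ∫ t in a..b, v t := mul_comm _ _
    _ ≤ ∫ t in a..b, α' t := hint
    _ = y.1 - x.1 := hrhs


/-- Containment of causal diamonds in a Lorentzian warped product `I ×_f X` over a
length space: for `p = (t₀, p̄) ≤ q = (t₁, q̄)`,
`J(p,q) ⊆ {(t,r̄) : t₀ ≤ t ≤ t₁, d(p̄,r̄) ≤ (t−t₀)/m_{t₀,t}, d(r̄,q̄) ≤ (t₁−t)/m_{t,t₁}}`,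
where `m_{s,t} = min_{s ≤ u ≤ t} f(u)`. -/
theorem stmt15 {X : Type*} [MetricSpace X] (hlen : IsLengthSpace X)
    (I : Set ℝ) (hIopen : IsOpen I) (hIconn : I.OrdConnected)
    (f : ℝ → ℝ) (hf : ContinuousOn f I) (hfpos : ∀ t ∈ I, 0 < f t)
    (p q : ℝ × X) (hp : p.1 ∈ I) (hq : q.1 ∈ I) (hpq : WPcausal I f p q) :
    cdiam (WPcausal I f) p q ⊆
      {r : ℝ × X | p.1 ≤ r.1 ∧ r.1 ≤ q.1 ∧
        dist p.2 r.2 ≤ (r.1 - p.1) / sInf (f '' Set.Icc p.1 r.1) ∧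
        dist r.2 q.2 ≤ (q.1 - r.1) / sInf (f '' Set.Icc r.1 q.1)} := by
  intro r hr
  obtain ⟨h1, h2⟩ := hr
  obtain ⟨ha, hb⟩ := wp_causal_bound hIconn hf hfpos h1
  obtain ⟨hc, hd⟩ := wp_causal_bound hIconn hf hfpos h2
  exact ⟨ha, hc, hb, hd⟩
end
end

section
/- Let (I ×_f X, D, ≤, ≪, τ) be a Lorentzian warped product with I ⊆ ℝ an open interval and (X,d) a proper geodesic length space. Then W^N = V^N, where both measures are taken with respect to the product metric D. -/
open Set MeasureTheory
open scoped ENNReal NNReal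

noncomputable section

variable {Y : Type*}

/-- A geodesic space: any two points are joined by an isometric segment. -/
def IsGeodesicSpace (X : Type*) [MetricSpace X] : Prop :=
  ∀ x y : X, ∃ γ : ℝ → X, γ 0 = x ∧ γ (dist x y) = y ∧
    ∀ s ∈ Set.Icc 0 (dist x y), ∀ t ∈ Set.Icc 0 (dist x y), dist (γ s) (γ t) = |s - t|

/-- The time separation of a Lorentzian warped product: the supremum of the lengths
`∫ √(α̇² − (f∘α)² v²)` of future-directed causal curves from `p` to `q`. -/
def WPtau {X : Type*} [MetricSpace X] (I : Set ℝ) (f : ℝ → ℝ) (p q : ℝ × X) : ℝ≥0∞ :=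
  ⨆ (α : ℝ → ℝ) (β : ℝ → X) (a : ℝ) (b : ℝ) (α' : ℝ → ℝ) (v : ℝ → ℝ)
    (_ : IsWPCausalCurve I f α β a b ∧ WPCausalWitness f α β a b α' v ∧
      α a = p.1 ∧ β a = p.2 ∧ α b = q.1 ∧ β b = q.2),
    ENNReal.ofReal (∫ t in a..b, Real.sqrt (α' t ^ 2 - (f (α t) * v t) ^ 2))


/-!
`W^N ≤ V^N` holds because the vertices of a causal diamond belong to it. Conversely, along a
causal curve `f(α) |β̇| ≤ α̇`, so where `f ≥ m > 0` the diamond `J(p,q)` has diameter at most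
`max 1 (2/m)` times `q.1 - p.1 ≤ d(p,q)`. Hence, on a set whose times have an `r`-neighbourhood
on which `f ≥ m`, a cover by diamonds with close vertices is a cover by diamonds of small
diameter, and `V^N ≤ W^N` there. The general case follows by exhausting `I` by compact sets
`K n`: `V^N` is a metric outer measure, so the closed sets `K n ×ˢ univ` are Carathéodory
measurable and `V^N (A ∩ (K n ×ˢ univ))` increases to `V^N A`.
-/

open Metric Filter Topology

section Covers

variable {e : Y → Y → ℝ≥0∞} {causal : Y → Y → Prop} {tau : Y → Y → ℝ≥0∞} {ω N : ℝ}
  {δ δ' s : ℝ≥0∞} {A B E F : Set Y}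

lemma le_ediamWith {S : Set Y} {p q : Y} (hp : p ∈ S) (hq : q ∈ S) : e p q ≤ ediamWith e S :=
  le_iSup₂_of_le p hp (le_iSup₂_of_le q hq le_rfl)

@[simp]
lemma ediamWith_empty : ediamWith e (∅ : Set Y) = 0 := by
  simp [ediamWith]

lemma Vdelta_le_tsum {c : ℕ → Option (Y × Y)} (hc : ∀ i, ∀ ab ∈ c i, causal ab.1 ab.2)
    (hdiam : ∀ i, ediamWith e (optDiamond causal (c i)) < δ)
    (hA : A ⊆ ⋃ i, optDiamond causal (c i)) :
    Vdelta e causal tau ω N δ A ≤ ∑' i, optWeight tau ω N (c i) :=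
  iInf_le_of_le c <| iInf_le_of_le hc <| iInf_le_of_le hdiam <| iInf_le_of_le hA le_rfl

lemma Vdelta_mono (hAB : A ⊆ B) : Vdelta e causal tau ω N δ A ≤ Vdelta e causal tau ω N δ B :=
  iInf_mono fun _ => iInf_mono fun _ => iInf_mono fun _ => iInf_mono' fun h => ⟨hAB.trans h, le_rfl⟩

lemma Wdelta_mono (hAB : A ⊆ B) : Wdelta e causal tau ω N δ A ≤ Wdelta e causal tau ω N δ B :=
  iInf_mono fun _ => iInf_mono fun _ => iInf_mono fun _ => iInf_mono' fun h => ⟨hAB.trans h, le_rfl⟩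

lemma Vdelta_anti (hδ : δ ≤ δ') : Vdelta e causal tau ω N δ' A ≤ Vdelta e causal tau ω N δ A :=
  iInf_mono fun _ => iInf_mono fun _ =>
    iInf_mono' fun h => ⟨fun i => (h i).trans_le hδ, le_rfl⟩

lemma Vdelta_le_Vmeas (hδ : 0 < δ) : Vdelta e causal tau ω N δ A ≤ Vmeas e causal tau ω N A :=
  le_iSup₂_of_le δ hδ le_rfl

lemma Wdelta_le_Wmeas (hδ : 0 < δ) : Wdelta e causal tau ω N δ A ≤ Wmeas e causal tau ω N A :=
  le_iSup₂_of_le δ hδ le_rfl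

lemma Vmeas_mono (hAB : A ⊆ B) : Vmeas e causal tau ω N A ≤ Vmeas e causal tau ω N B :=
  iSup₂_mono fun _ _ => Vdelta_mono hAB

lemma Wmeas_mono (hAB : A ⊆ B) : Wmeas e causal tau ω N A ≤ Wmeas e causal tau ω N B :=
  iSup₂_mono fun _ _ => Wdelta_mono hAB

lemma Vdelta_empty (hδ : 0 < δ) : Vdelta e causal tau ω N δ ∅ = 0 :=
  nonpos_iff_eq_zero.1 <| (Vdelta_le_tsum (c := fun _ => none) (by simp)
    (by simpa [optDiamond] using hδ) (empty_subset _)).trans_eq (by simp [optWeight])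

lemma Vmeas_empty : Vmeas e causal tau ω N ∅ = 0 :=
  nonpos_iff_eq_zero.1 <| iSup₂_le fun _ hδ => (Vdelta_empty hδ).le

lemma edist_le_ediamWith_cdiam (hrefl : ∀ x, causal x x) {a b : Y} (hab : causal a b) :
    e a b ≤ ediamWith e (cdiam causal a b) :=
  le_ediamWith ⟨hrefl a, hab⟩ ⟨hab, hrefl b⟩

lemma Wdelta_le_Vdelta (hrefl : ∀ x, causal x x) :
    Wdelta e causal tau ω N δ A ≤ Vdelta e causal tau ω N δ A :=
  iInf_mono fun c => iInf_mono fun hc => iInf_mono' fun hdiam =>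
    ⟨fun i ab hab => by
      have hlt := hdiam i
      rw [show c i = some ab from hab] at hlt
      exact (edist_le_ediamWith_cdiam hrefl (hc i ab hab)).trans_lt hlt, le_rfl⟩

lemma Wmeas_le_Vmeas (hrefl : ∀ x, causal x x) :
    Wmeas e causal tau ω N A ≤ Vmeas e causal tau ω N A :=
  iSup₂_mono fun _ _ => Wdelta_le_Vdelta hrefl

lemma Vdelta_iUnion_le (E : ℕ → Set Y) :
    Vdelta e causal tau ω N δ (⋃ n, E n) ≤ ∑' n, Vdelta e causal tau ω N δ (E n) := by
  refine ENNReal.le_of_forall_pos_le_add fun ε hε hfin => ?_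
  obtain ⟨ε', hε', hε'sum⟩ := ENNReal.exists_pos_sum_of_countable' (ENNReal.coe_pos.2 hε).ne' ℕ
  have hcover : ∀ n, ∃ c : ℕ → Option (Y × Y), (∀ i, ∀ ab ∈ c i, causal ab.1 ab.2) ∧
      (∀ i, ediamWith e (optDiamond causal (c i)) < δ) ∧ E n ⊆ ⋃ i, optDiamond causal (c i) ∧
      ∑' i, optWeight tau ω N (c i) < Vdelta e causal tau ω N δ (E n) + ε' n := by
    intro n
    have hlt := ENNReal.lt_add_right (ne_top_of_le_ne_top hfin.ne (ENNReal.le_tsum n))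
      (hε' n).ne'
    simpa only [Vdelta, iInf_lt_iff, exists_prop] using hlt
  choose c hc hdiam hE hsum using hcover
  let C : ℕ → Option (Y × Y) := fun k => c (Nat.unpair k).1 (Nat.unpair k).2
  have hC : ⋃ n, E n ⊆ ⋃ k, optDiamond causal (C k) := by
    refine iUnion_subset fun n => (hE n).trans (iUnion_subset fun i => ?_)
    exact subset_iUnion_of_subset (Nat.pair n i) (by simp [C])
  calc Vdelta e causal tau ω N δ (⋃ n, E n) ≤ ∑' k, optWeight tau ω N (C k) :=
        Vdelta_le_tsum (fun k => hc _ _) (fun k => hdiam _ _) hC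
    _ = ∑' n, ∑' i, optWeight tau ω N (c n i) := by
        rw [← ENNReal.tsum_prod, ← Nat.pairEquiv.symm.tsum_eq]
        rfl
    _ ≤ ∑' n, (Vdelta e causal tau ω N δ (E n) + ε' n) :=
        ENNReal.tsum_le_tsum fun n => (hsum n).le
    _ ≤ ∑' n, Vdelta e causal tau ω N δ (E n) + ε := by
        rw [ENNReal.tsum_add]
        exact add_le_add_right hε'sum.le _

lemma Vmeas_iUnion_le (E : ℕ → Set Y) :
    Vmeas e causal tau ω N (⋃ n, E n) ≤ ∑' n, Vmeas e causal tau ω N (E n) :=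
  iSup₂_le fun _ hδ => (Vdelta_iUnion_le E).trans <|
    ENNReal.tsum_le_tsum fun _ => Vdelta_le_Vmeas hδ

open scoped Classical in
def pruneCover (causal : Y → Y → Prop) (A : Set Y) (c : ℕ → Option (Y × Y)) (i : ℕ) :
    Option (Y × Y) :=
  if (optDiamond causal (c i) ∩ A).Nonempty then c i else none

variable {c : ℕ → Option (Y × Y)}

lemma pruneCover_eq_or (i : ℕ) :
    pruneCover causal A c i = c i ∨ pruneCover causal A c i = none := by
  unfold pruneCover
  split_ifs <;> simp

lemma mem_pruneCover {i : ℕ} {ab : Y × Y} :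
    ab ∈ pruneCover causal A c i ↔ ab ∈ c i ∧ (cdiam causal ab.1 ab.2 ∩ A).Nonempty := by
  unfold pruneCover
  split_ifs with h
  · refine ⟨fun hab => ⟨hab, ?_⟩, And.left⟩
    rwa [show c i = some ab from hab] at h
  · refine ⟨fun hab => by simp at hab, fun ⟨hab, hA⟩ => ?_⟩
    rw [show c i = some ab from hab] at h
    exact absurd hA h

lemma subset_iUnion_optDiamond_pruneCover (hA : A ⊆ ⋃ i, optDiamond causal (c i)) :
    A ⊆ ⋃ i, optDiamond causal (pruneCover causal A c i) := by
  intro x hx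
  obtain ⟨i, hi⟩ := mem_iUnion.1 (hA hx)
  refine mem_iUnion.2 ⟨i, ?_⟩
  rwa [pruneCover, if_pos ⟨x, hi, hx⟩]

lemma Vdelta_le_Wdelta (hδ : 0 < δ)
    (h : ∀ a b, causal a b → e a b < s → (cdiam causal a b ∩ A).Nonempty →
      ediamWith e (cdiam causal a b) < δ) :
    Vdelta e causal tau ω N δ A ≤ Wdelta e causal tau ω N s A := by
  refine le_iInf fun c => le_iInf fun hc => le_iInf fun hs => le_iInf fun hA => ?_
  have hcausal : ∀ i, ∀ ab ∈ pruneCover causal A c i, causal ab.1 ab.2 :=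
    fun i ab hab => hc i ab (mem_pruneCover.1 hab).1
  have hdiam : ∀ i, ediamWith e (optDiamond causal (pruneCover causal A c i)) < δ := by
    intro i
    cases hi : pruneCover causal A c i with
    | none => simpa [optDiamond] using hδ
    | some ab =>
      obtain ⟨hab, hmeet⟩ := mem_pruneCover.1 hi
      exact h _ _ (hc i ab hab) (hs i ab hab) hmeet
  calc Vdelta e causal tau ω N δ A ≤ ∑' i, optWeight tau ω N (pruneCover causal A c i) :=
        Vdelta_le_tsum hcausal hdiam (subset_iUnion_optDiamond_pruneCover hA)
    _ ≤ ∑' i, optWeight tau ω N (c i) := ENNReal.tsum_le_tsum fun i => by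
        rcases pruneCover_eq_or (A := A) (causal := causal) (c := c) i with h | h <;>
          simp [h, optWeight]

lemma Vdelta_add_le_of_le_edist (hδ : 0 < δ) (hsep : ∀ p ∈ E, ∀ q ∈ F, δ ≤ e p q) :
    Vdelta e causal tau ω N δ E + Vdelta e causal tau ω N δ F
      ≤ Vdelta e causal tau ω N δ (E ∪ F) := by
  refine le_iInf fun c => le_iInf fun hc => le_iInf fun hdiam => le_iInf fun hEF => ?_
  have hprune : ∀ G ⊆ E ∪ F,
      Vdelta e causal tau ω N δ G ≤ ∑' i, optWeight tau ω N (pruneCover causal G c i) := by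
    refine fun G hG => Vdelta_le_tsum (fun i ab hab => hc i ab (mem_pruneCover.1 hab).1)
      (fun i => ?_) (subset_iUnion_optDiamond_pruneCover (hG.trans hEF))
    rcases pruneCover_eq_or (A := G) (causal := causal) (c := c) i with h | h
    · rw [h]; exact hdiam i
    · simpa [h, optDiamond] using hδ
  -- a diamond of diameter `< δ` cannot meet both `E` and `F`
  have hweight : ∀ i, optWeight tau ω N (pruneCover causal E c i)
      + optWeight tau ω N (pruneCover causal F c i) ≤ optWeight tau ω N (c i) := by
    intro i
    by_cases hE : (optDiamond causal (c i) ∩ E).Nonempty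
    · have hF : ¬ (optDiamond causal (c i) ∩ F).Nonempty := by
        rintro ⟨q, hqD, hqF⟩
        obtain ⟨p, hpD, hpE⟩ := hE
        exact (hsep p hpE q hqF).trans (le_ediamWith hpD hqD) |>.not_gt (hdiam i)
      simp [pruneCover, hE, hF, optWeight]
    · by_cases hF : (optDiamond causal (c i) ∩ F).Nonempty <;>
        simp [pruneCover, hE, hF, optWeight]
  calc Vdelta e causal tau ω N δ E + Vdelta e causal tau ω N δ F
      ≤ ∑' i, optWeight tau ω N (pruneCover causal E c i)
          + ∑' i, optWeight tau ω N (pruneCover causal F c i) :=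
        add_le_add (hprune E subset_union_left) (hprune F subset_union_right)
    _ ≤ ∑' i, optWeight tau ω N (c i) := by
        rw [← ENNReal.tsum_add]
        exact ENNReal.tsum_le_tsum hweight

lemma Vmeas_add_le_of_le_edist {ε : ℝ≥0∞} (hε : ε ≠ 0) (hsep : ∀ p ∈ E, ∀ q ∈ F, ε ≤ e p q) :
    Vmeas e causal tau ω N E + Vmeas e causal tau ω N F ≤ Vmeas e causal tau ω N (E ∪ F) := by
  refine ENNReal.biSup_add_biSup_le' ⟨1, one_pos⟩ ⟨1, one_pos⟩ fun δ₁ h₁ δ₂ h₂ => ?_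
  have hδ : 0 < min (min δ₁ δ₂) ε := lt_min (lt_min h₁ h₂) hε.bot_lt
  calc Vdelta e causal tau ω N δ₁ E + Vdelta e causal tau ω N δ₂ F
      ≤ Vdelta e causal tau ω N (min (min δ₁ δ₂) ε) E
          + Vdelta e causal tau ω N (min (min δ₁ δ₂) ε) F :=
        add_le_add (Vdelta_anti ((min_le_left _ _).trans (min_le_left _ _)))
          (Vdelta_anti ((min_le_left _ _).trans (min_le_right _ _)))
    _ ≤ Vdelta e causal tau ω N (min (min δ₁ δ₂) ε) (E ∪ F) :=
        Vdelta_add_le_of_le_edist hδ fun p hp q hq => (min_le_right _ _).trans (hsep p hp q hq)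
    _ ≤ Vmeas e causal tau ω N (E ∪ F) := Vdelta_le_Vmeas hδ

end Covers

def vOuterMeasure (e : Y → Y → ℝ≥0∞) (causal : Y → Y → Prop) (tau : Y → Y → ℝ≥0∞) (ω N : ℝ) :
    OuterMeasure Y where
  measureOf := Vmeas e causal tau ω N
  empty := Vmeas_empty
  mono := Vmeas_mono
  iUnion_nat E _ := Vmeas_iUnion_le E

lemma isMetric_vOuterMeasure [EMetricSpace Y] (causal : Y → Y → Prop) (tau : Y → Y → ℝ≥0∞)
    (ω N : ℝ) : (vOuterMeasure (fun a b : Y => edist a b) causal tau ω N).IsMetric :=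
  fun _ _ ⟨_, hr, hsep⟩ => le_antisymm (measure_union_le _ _) (Vmeas_add_le_of_le_edist hr hsep)

lemma MeasureTheory.OuterMeasure.measure_inter_iUnion_le_iSup {α : Type*} (m : OuterMeasure α)
    {K : ℕ → Set α} (hmono : Monotone K) (hK : ∀ n, m.IsCaratheodory (K n)) (t : Set α) :
    m (t ∩ ⋃ n, K n) ≤ ⨆ n, m (t ∩ K n) :=
  calc m (t ∩ ⋃ n, K n) = m (⋃ n, t ∩ disjointed K n) := by
        rw [← iUnion_disjointed, inter_iUnion]
    _ ≤ ∑' n, m (t ∩ disjointed K n) := measure_iUnion_le _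
    _ = ⨆ n, m (t ∩ ⋃ i < n, disjointed K i) := by
        rw [ENNReal.tsum_eq_iSup_nat]
        simp only [m.isCaratheodory_sum (m.isCaratheodory_disjointed hK) (disjoint_disjointed K)]
    _ ≤ ⨆ n, m (t ∩ K n) := iSup_mono fun n => m.mono <| inter_subset_inter_right _ <|
        iUnion₂_subset fun i hi => (disjointed_subset K i).trans (hmono (Nat.le_of_lt hi))

lemma isCaratheodory_vOuterMeasure [EMetricSpace Y] (causal : Y → Y → Prop)
    (tau : Y → Y → ℝ≥0∞) (ω N : ℝ) {s : Set Y} (hs : IsClosed s) :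
    (vOuterMeasure (fun a b : Y => edist a b) causal tau ω N).IsCaratheodory s := by
  borelize Y
  exact (isMetric_vOuterMeasure causal tau ω N).borel_le_caratheodory _ hs.measurableSet

lemma ae_nonneg_of_monotoneOn_integral {g : ℝ → ℝ} {a b : ℝ} (hab : a < b)
    (hg : IntervalIntegrable g volume a b)
    (hmono : MonotoneOn (fun x => ∫ t in a..x, g t) (Icc a b)) :
    ∀ᵐ x, x ∈ Icc a b → 0 ≤ g x := by
  filter_upwards [hg.ae_hasDerivAt_integral] with x hx hxab
  rw [uIcc_of_le hab.le] at hx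
  refine ((hx hxab a (left_mem_Icc.2 hab.le)).hasDerivWithinAt).nonneg_of_monotoneOn ?_ hmono
  rw [accPt_principal_iff_nhdsWithin]
  rcases hxab.2.lt_or_eq with hxb | rfl
  · exact (left_nhdsWithin_Ioo_neBot hxb).mono <| nhdsWithin_mono _ fun y hy =>
      ⟨⟨hxab.1.trans hy.1.le, hy.2.le⟩, hy.1.ne'⟩
  · exact (right_nhdsWithin_Ioo_neBot hab).mono <| nhdsWithin_mono _ fun y hy =>
      ⟨⟨hy.1.le, hy.2.le⟩, hy.2.ne⟩

lemma IsOpen.exists_monotone_isCompact_iUnion_eq {α : Type*} [TopologicalSpace α]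
    [LocallyCompactSpace α] [SecondCountableTopology α] {U : Set α} (hU : IsOpen U) :
    ∃ K : ℕ → Set α, Monotone K ∧ (∀ n, IsCompact (K n)) ∧ ⋃ n, K n = U := by
  have := hU.locallyCompactSpace
  refine ⟨fun n => (↑) '' compactCovering U n, fun m n h => image_mono (compactCovering_subset U h),
    fun n => (isCompact_compactCovering U n).image continuous_subtype_val, ?_⟩
  rw [← image_iUnion, iUnion_compactCovering, image_univ, Subtype.range_coe]

lemma IsCompact.exists_pos_le_of_subset_open {K U : Set ℝ} {f : ℝ → ℝ} (hK : IsCompact K)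
    (hU : IsOpen U) (hKU : K ⊆ U) (hf : ContinuousOn f U) (hfpos : ∀ t ∈ U, 0 < f t) :
    ∃ m > 0, ∃ r > 0, ∀ t ∈ K, ∀ u ∈ Icc (t - r) (t + r), m ≤ f u := by
  obtain ⟨r, hr, hrU⟩ := hK.exists_cthickening_subset_open hU hKU
  obtain ⟨m, hm, hmf⟩ := hK.cthickening.exists_forall_le' (hf.mono hrU) fun t ht => hfpos t (hrU ht)
  refine ⟨m, hm, r, hr, fun t ht u hu => hmf u ?_⟩
  exact closedBall_subset_cthickening ht r (by rwa [Real.closedBall_eq_Icc])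

section WarpedProduct

variable {X : Type*} [MetricSpace X] {I : Set ℝ} {f : ℝ → ℝ} {p q : ℝ × X}

lemma WPcausal.fst_le (h : WPcausal I f p q) : p.1 ≤ q.1 := by
  rcases h with rfl | ⟨α, β, a, b, ⟨hab, hα, -⟩, ha, -, hb, -⟩
  · exact le_rfl
  · rw [← ha, ← hb]
    exact hα.monotoneOn (left_mem_Icc.2 hab.le) (right_mem_Icc.2 hab.le) hab.le

lemma WPcausal.mul_dist_snd_le (h : WPcausal I f p q) {m : ℝ} (hm : 0 ≤ m)
    (hmf : ∀ t ∈ Icc p.1 q.1, m ≤ f t) : m * dist p.2 q.2 ≤ q.1 - p.1 := by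
  rcases h with rfl | ⟨α, β, a, b, ⟨hab, hα, -, α', v, hα', hv, hv0, hFTC, hβ, hcausal⟩,
    ha, ha', hb, hb'⟩
  · simp
  rw [← ha, ← hb] at hmf
  rw [← ha, ← ha', ← hb, ← hb']
  have hαIcc : ∀ t ∈ Icc a b, α t ∈ Icc (α a) (α b) := fun t ht =>
    ⟨hα.monotoneOn (left_mem_Icc.2 hab.le) ht ht.1, hα.monotoneOn ht (right_mem_Icc.2 hab.le) ht.2⟩
  have hα'nonneg : ∀ᵐ t, t ∈ Icc a b → 0 ≤ α' t := by
    refine ae_nonneg_of_monotoneOn_integral hab hα' fun x hx y hy hxy => ?_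
    simp only [← hFTC x hx, ← hFTC y hy]
    linarith [hα.monotoneOn hx hy hxy]
  have hspeed : (fun t => m * v t) ≤ᵐ[volume.restrict (Icc a b)] α' := by
    rw [EventuallyLE, ae_restrict_iff' measurableSet_Icc]
    filter_upwards [hα'nonneg, hcausal] with t hnonneg hsq ht
    calc m * v t ≤ f (α t) * v t := mul_le_mul_of_nonneg_right (hmf _ (hαIcc t ht)) (hv0 t)
      _ ≤ α' t := (le_abs_self _).trans (abs_le_of_sq_le_sq (hsq ht) (hnonneg ht))
  calc m * dist (β a) (β b) ≤ m * ∫ t in a..b, v t :=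
        mul_le_mul_of_nonneg_left
          (hβ a (left_mem_Icc.2 hab.le) b (right_mem_Icc.2 hab.le) hab.le) hm
    _ = ∫ t in a..b, m * v t := (intervalIntegral.integral_const_mul m v).symm
    _ ≤ ∫ t in a..b, α' t :=
        intervalIntegral.integral_mono_ae_restrict hab.le (hv.const_mul m) hα' hspeed
    _ = α b - α a := (hFTC b (right_mem_Icc.2 hab.le)).symm

lemma WPcausal.ediamWith_cdiam_le (h : WPcausal I f p q) {m : ℝ} (hm : 0 < m)
    (hmf : ∀ t ∈ Icc p.1 q.1, m ≤ f t) :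
    ediamWith (fun a b : ℝ × X => edist a b) (cdiam (WPcausal I f) p q)
      ≤ ENNReal.ofReal ((q.1 - p.1) * max 1 (2 / m)) := by
  have hpq := h.fst_le
  have hspatial : ∀ z ∈ cdiam (WPcausal I f) p q, m * dist p.2 z.2 ≤ q.1 - p.1 := by
    rintro z ⟨hpz, hzq⟩
    have hzq' := hzq.fst_le
    exact (hpz.mul_dist_snd_le hm.le fun t ht => hmf t ⟨ht.1, ht.2.trans hzq'⟩).trans (by linarith)
  refine iSup₂_le fun z hz => iSup₂_le fun w hw => ?_
  change edist z w ≤ _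
  rw [edist_dist, Prod.dist_eq]
  refine ENNReal.ofReal_le_ofReal (max_le ?_ ?_)
  · have := hz.1.fst_le; have := hz.2.fst_le; have := hw.1.fst_le; have := hw.2.fst_le
    rw [Real.dist_eq, abs_sub_le_iff]
    constructor <;> nlinarith [le_max_left 1 (2 / m)]
  · have hzw : m * dist z.2 w.2 ≤ 2 * (q.1 - p.1) := by
      have := dist_triangle_left z.2 w.2 p.2
      nlinarith [hspatial z hz, hspatial w hw]
    calc dist z.2 w.2 ≤ (q.1 - p.1) * (2 / m) := by
          rw [mul_div_assoc', le_div_iff₀ hm]; linarith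
      _ ≤ (q.1 - p.1) * max 1 (2 / m) := mul_le_mul_of_nonneg_left (le_max_right _ _) (by linarith)

lemma Vmeas_le_Wmeas_of_forall_le {tau : ℝ × X → ℝ × X → ℝ≥0∞} {ω N : ℝ} {A : Set (ℝ × X)}
    {m r : ℝ} (hm : 0 < m) (hr : 0 < r) (hmf : ∀ p ∈ A, ∀ t ∈ Icc (p.1 - r) (p.1 + r), m ≤ f t) :
    Vmeas (fun a b : ℝ × X => edist a b) (WPcausal I f) tau ω N A
      ≤ Wmeas (fun a b : ℝ × X => edist a b) (WPcausal I f) tau ω N A := by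
  refine iSup₂_le fun δ hδ => ?_
  obtain ⟨η, -, hη, hηδ⟩ := ENNReal.lt_iff_exists_real_btwn.1 hδ
  rw [ENNReal.ofReal_pos] at hη
  set C := max 1 (2 / m)
  have hC : 0 < C := lt_max_of_lt_left one_pos
  have hs : 0 < min r (η / C) := lt_min hr (div_pos hη hC)
  refine (Vdelta_le_Wdelta hδ ?_).trans (Wdelta_le_Wmeas (ENNReal.ofReal_pos.2 hs))
  rintro a b hab hdist ⟨z, ⟨haz, hzb⟩, hzA⟩
  rw [edist_dist, ENNReal.ofReal_lt_ofReal_iff hs, Prod.dist_eq, max_lt_iff, Real.dist_eq,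
    abs_sub_lt_iff] at hdist
  obtain ⟨hbr, hbη⟩ := lt_min_iff.1 hdist.1.2
  have := haz.fst_le; have := hzb.fst_le
  calc ediamWith _ (cdiam (WPcausal I f) a b) ≤ ENNReal.ofReal ((b.1 - a.1) * C) :=
        hab.ediamWith_cdiam_le hm fun t ht => hmf z hzA t ⟨by linarith [ht.1], by linarith [ht.2]⟩
    _ ≤ ENNReal.ofReal η := by
        refine ENNReal.ofReal_le_ofReal ?_
        calc (b.1 - a.1) * C ≤ η / C * C := by gcongr
          _ = η := div_mul_cancel₀ η hC.ne'
    _ < δ := hηδ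

end WarpedProduct

theorem stmt16_general {X : Type*} [MetricSpace X]
    (I : Set ℝ) (hIopen : IsOpen I)
    (f : ℝ → ℝ) (hf : ContinuousOn f I) (hfpos : ∀ t ∈ I, 0 < f t)
    (ω N : ℝ)
    (A : Set (ℝ × X)) (hA : A ⊆ I ×ˢ Set.univ) :
    Wmeas (fun a b : ℝ × X => edist a b) (WPcausal I f) (WPtau I f) ω N A =
      Vmeas (fun a b : ℝ × X => edist a b) (WPcausal I f) (WPtau I f) ω N A := by
  refine le_antisymm (Wmeas_le_Vmeas fun _ => Or.inl rfl) ?_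
  set e : ℝ × X → ℝ × X → ℝ≥0∞ := fun a b => edist a b
  set μ := vOuterMeasure e (WPcausal I f) (WPtau I f) ω N
  obtain ⟨K, hKmono, hKcpt, hKI⟩ := hIopen.exists_monotone_isCompact_iUnion_eq
  have hAK : A ∩ ⋃ n, Prod.fst ⁻¹' K n = A := by
    rw [← preimage_iUnion, hKI, inter_eq_left]
    exact fun p hp => (hA hp).1
  have hclosed (n : ℕ) : IsClosed (Prod.fst ⁻¹' K n : Set (ℝ × X)) :=
    (hKcpt n).isClosed.preimage continuous_fst
  calc μ A = μ (A ∩ ⋃ n, Prod.fst ⁻¹' K n) := by rw [hAK]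
    _ ≤ ⨆ n, μ (A ∩ Prod.fst ⁻¹' K n) :=
        μ.measure_inter_iUnion_le_iSup (fun _ _ h => preimage_mono (hKmono h))
          (fun n => isCaratheodory_vOuterMeasure _ _ _ _ (hclosed n)) A
    _ ≤ ⨆ n, Wmeas e (WPcausal I f) (WPtau I f) ω N (A ∩ Prod.fst ⁻¹' K n) := by
        refine iSup_mono fun n => ?_
        obtain ⟨m, hm, r, hr, hmf⟩ :=
          (hKcpt n).exists_pos_le_of_subset_open hIopen (hKI ▸ subset_iUnion K n) hf hfpos
        exact Vmeas_le_Wmeas_of_forall_le hm hr fun p hp => hmf p.1 hp.2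
    _ ≤ _ := iSup_le fun n => Wmeas_mono inter_subset_left

/-- On a Lorentzian warped product `I ×_f X` over a proper geodesic length space, the
measures `W^N` and `V^N` (with respect to the product metric) coincide. -/
theorem stmt16 {X : Type*} [MetricSpace X] [ProperSpace X]
    (hlen : IsLengthSpace X) (hgeo : IsGeodesicSpace X)
    (I : Set ℝ) (hIopen : IsOpen I) (hIconn : I.OrdConnected)
    (f : ℝ → ℝ) (hf : ContinuousOn f I) (hfpos : ∀ t ∈ I, 0 < f t)
    (ω N : ℝ) (hω : 0 < ω) (hN : 0 ≤ N)
    (A : Set (ℝ × X)) (hA : A ⊆ I ×ˢ Set.univ) :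
    Wmeas (fun a b : ℝ × X => edist a b) (WPcausal I f) (WPtau I f) ω N A =
      Vmeas (fun a b : ℝ × X => edist a b) (WPcausal I f) (WPtau I f) ω N A :=
  stmt16_general I hIopen f hf hfpos ω N A hA
end
end
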